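/- arXiv:2502.17466 — 2 statements merged into one kernel-verified Lean document; each statement's English description precedes it below -/
import Mathlib

section
/- Let H be a canonical hypergroup and K a canonical subhypergroup. Then the abelianized fundamental group of H/K satisfies γ*(H/K) ≅ H/(H'∘K), where H' is the derived subhypergroup of H. -/
open Set
set_option linter.unusedSectionVars false

/-- A hypergroup: a nonempty-set-valued binary hyperoperation that is associative
and reproductive. -/
structure Hypergroup (H : Type) where
  hmul : H → H → Set H
  nonempty : ∀ a b, (hmul a b).Nonempty
  assoc : ∀ a b c, (⋃ x ∈ hmul a b, hmul x c) = ⋃ y ∈ hmul b c, hmul a y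
  reproL : ∀ a, (⋃ x, hmul a x) = Set.univ
  reproR : ∀ a, (⋃ x, hmul x a) = Set.univ

namespace Hypergroup

variable {H : Type}

/-- Product of two subsets. -/
def smul (hg : Hypergroup H) (A B : Set H) : Set H := ⋃ a ∈ A, ⋃ b ∈ B, hg.hmul a b

/-- Hyperproduct of an element with a list of further factors. -/
def hprod (hg : Hypergroup H) : H → List H → Set H
  | a, [] => {a}
  | a, b :: l => ⋃ x ∈ hg.hmul a b, hg.hprod x l

/-- Hyperproduct of a (nonempty) list of factors. -/
def sprod (hg : Hypergroup H) : List H → Set H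
  | [] => ∅
  | a :: l => hg.hprod a l

/-- The relation β : being together in some finite hyperproduct. -/
def beta (hg : Hypergroup H) (a b : H) : Prop := ∃ l, a ∈ hg.sprod l ∧ b ∈ hg.sprod l

/-- β*, the transitive (equivalence) closure of β. -/
def betaStar (hg : Hypergroup H) : H → H → Prop := Relation.EqvGen hg.beta

/-- The relation γ : lying in hyperproducts of permuted factor lists. -/
def gamma (hg : Hypergroup H) (a b : H) : Prop :=
  ∃ l l' : List H, l.Perm l' ∧ a ∈ hg.sprod l ∧ b ∈ hg.sprod l'

/-- γ*, the transitive (equivalence) closure of γ. -/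
def gammaStar (hg : Hypergroup H) : H → H → Prop := Relation.EqvGen hg.gamma

/-- A strongly regular equivalence relation. -/
def StronglyRegular (hg : Hypergroup H) (r : H → H → Prop) : Prop :=
  Equivalence r ∧
  ∀ a b x, r a b →
    (∀ u ∈ hg.hmul a x, ∀ v ∈ hg.hmul b x, r u v) ∧
    (∀ u ∈ hg.hmul x a, ∀ v ∈ hg.hmul x b, r u v)

/-- A regular equivalence relation. -/
def Regular (hg : Hypergroup H) (r : H → H → Prop) : Prop :=
  Equivalence r ∧
  ∀ a b x, r a b →
    ((∀ u ∈ hg.hmul a x, ∃ v ∈ hg.hmul b x, r u v) ∧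
     (∀ v ∈ hg.hmul b x, ∃ u ∈ hg.hmul a x, r u v)) ∧
    ((∀ u ∈ hg.hmul x a, ∃ v ∈ hg.hmul x b, r u v) ∧
     (∀ v ∈ hg.hmul x b, ∃ u ∈ hg.hmul x a, r u v))

/-- A subhypergroup: nonempty, closed under the hyperoperation, reproductive inside. -/
def IsSubhypergroup (hg : Hypergroup H) (K : Set H) : Prop :=
  K.Nonempty ∧ (∀ a ∈ K, ∀ b ∈ K, hg.hmul a b ⊆ K) ∧
  (∀ a ∈ K, K ⊆ hg.smul {a} K) ∧ (∀ a ∈ K, K ⊆ hg.smul K {a})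

/-- A closed subhypergroup: solutions of `b ∈ a∘x`, `b ∈ x∘a` with `a,b ∈ K` lie in `K`. -/
def IsClosed (hg : Hypergroup H) (K : Set H) : Prop :=
  ∀ a ∈ K, ∀ b ∈ K, ∀ x, (b ∈ hg.hmul a x → x ∈ K) ∧ (b ∈ hg.hmul x a → x ∈ K)

/-- A complete part: if a finite hyperproduct meets it, it contains it. -/
def IsCompletePart (hg : Hypergroup H) (C : Set H) : Prop :=
  ∀ l : List H, l ≠ [] → (hg.sprod l ∩ C).Nonempty → hg.sprod l ⊆ C

/-- The β-heart `S_β` : elements whose β*-class acts as identity. -/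
def heartBeta (hg : Hypergroup H) : Set H :=
  {h | ∀ x, ∀ z ∈ hg.hmul x h, hg.betaStar z x}

/-- The γ-heart `S_γ` (the derived subhypergroup `H'`). -/
def heartGamma (hg : Hypergroup H) : Set H :=
  {h | ∀ x, ∀ z ∈ hg.hmul x h, hg.gammaStar z x}

/-- The coset `x ∘ K`. -/
def coset (hg : Hypergroup H) (K : Set H) (x : H) : Set H := hg.smul {x} K

/-- Normal subhypergroup: `x ∘ K = K ∘ x` for all `x`. -/
def IsNormal (hg : Hypergroup H) (K : Set H) : Prop :=
  ∀ x, hg.smul {x} K = hg.smul K {x}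

/-- `φ : H → G` realizes the quotient group of `H` modulo the relation `r`. -/
def IsQuotientGroupMap (hg : Hypergroup H) (r : H → H → Prop) {G : Type} [Group G]
    (φ : H → G) : Prop :=
  Function.Surjective φ ∧ (∀ a b, φ a = φ b ↔ r a b) ∧
  ∀ a b, ∀ z ∈ hg.hmul a b, φ z = φ a * φ b

/-- The set of identities of a hypergroup. -/
def Ident (hg : Hypergroup H) : Set H :=
  {e | ∀ x, x ∈ hg.hmul e x ∧ x ∈ hg.hmul x e}

/-- `C_H(x)`. -/
def Cset (hg : Hypergroup H) (x : H) : Set H :=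
  {y | (hg.Ident ∩ (hg.hmul y x ∩ hg.hmul x y)).Nonempty}

/-- A strongly regular hypergroup: identities exist and each `C_H(x)` is a singleton. -/
def IsStronglyRegularHypergroup (hg : Hypergroup H) : Prop :=
  hg.Ident.Nonempty ∧ ∀ x, ∃ y, hg.Cset x = {y}

end Hypergroup

/-- A canonical hypergroup. -/
structure CanonicalHypergroup (H : Type) extends Hypergroup H where
  comm : ∀ a b, hmul a b = hmul b a
  zero : H
  zero_hmul : ∀ x, hmul zero x = {x}
  inv : H → H
  inv_spec : ∀ x, zero ∈ hmul x (inv x)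
  inv_unique : ∀ x y, zero ∈ hmul x y → y = inv x
  reversible : ∀ x y z, x ∈ hmul y z → y ∈ hmul x (inv z)

/-- `π : H → Q` realizes the quotient hypergroup `H/K`. -/
def IsQuotientHypergroupMap {H Q : Type} (hg : Hypergroup H) (K : Set H)
    (hq : Hypergroup Q) (π : H → Q) : Prop :=
  Function.Surjective π ∧ (∀ x y, π x = π y ↔ hg.coset K x = hg.coset K y) ∧
  ∀ x y, hq.hmul (π x) (π y) = π '' hg.hmul x y

section Aux

open Hypergroup

variable {H Q : Type}

namespace Hypergroup

lemma assoc_mem₁ (hg : Hypergroup H) {a b c w z : H}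
    (hw : w ∈ hg.hmul a b) (hz : z ∈ hg.hmul w c) :
    ∃ y ∈ hg.hmul b c, z ∈ hg.hmul a y := by
  have h1 : z ∈ ⋃ x ∈ hg.hmul a b, hg.hmul x c := mem_biUnion hw hz
  rw [hg.assoc] at h1
  simpa using h1

lemma assoc_mem₂ (hg : Hypergroup H) {a b c y z : H}
    (hy : y ∈ hg.hmul b c) (hz : z ∈ hg.hmul a y) :
    ∃ w ∈ hg.hmul a b, z ∈ hg.hmul w c := by
  have h1 : z ∈ ⋃ y ∈ hg.hmul b c, hg.hmul a y := mem_biUnion hy hz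
  rw [← hg.assoc] at h1
  simpa using h1

lemma mem_coset_iff (hg : Hypergroup H) {K : Set H} {a x : H} :
    x ∈ hg.coset K a ↔ ∃ k ∈ K, x ∈ hg.hmul a k := by
  simp [coset, smul]

lemma hprod_cons_eq (hg : Hypergroup H) (a b : H) (l : List H) :
    hg.hprod a (b :: l) = ⋃ y ∈ hg.hprod b l, hg.hmul a y := by
  induction l generalizing a b with
  | nil => simp [hprod]
  | cons c t ih =>
    ext z
    have e1 : hg.hprod a (b :: c :: t) = ⋃ x ∈ hg.hmul a b, hg.hprod x (c :: t) := rfl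
    simp only [e1, ih, mem_iUnion, exists_prop]
    constructor
    · rintro ⟨x, hx, s, hs, hz⟩
      obtain ⟨y, hy, hzy⟩ := hg.assoc_mem₁ hx hz
      exact ⟨y, ⟨s, hs, hy⟩, hzy⟩
    · rintro ⟨y, ⟨s, hs, hy⟩, hz⟩
      obtain ⟨x, hx, hzx⟩ := hg.assoc_mem₂ hy hz
      exact ⟨x, hx, s, hs, hzx⟩

lemma mem_sprod_cons (hg : Hypergroup H) {v t z : H} {l : List H}
    (hv : v ∈ hg.sprod l) (hz : z ∈ hg.hmul t v) : z ∈ hg.sprod (t :: l) := by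
  cases l with
  | nil => simp [sprod] at hv
  | cons a l₀ =>
    show z ∈ hg.hprod t (a :: l₀)
    rw [hg.hprod_cons_eq]
    exact mem_biUnion hv hz

end Hypergroup

namespace CanonicalHypergroup

variable (C : CanonicalHypergroup H)

lemma hmul_zero (x : H) : C.hmul x C.zero = {x} := by
  rw [C.comm]; exact C.zero_hmul x

lemma mem_hmul_zero (x : H) : x ∈ C.hmul x C.zero := by
  rw [C.hmul_zero]; exact rfl

lemma inv_inv (x : H) : C.inv (C.inv x) = x := by
  have h : C.zero ∈ C.hmul (C.inv x) x := by
    rw [C.comm]; exact C.inv_spec x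
  exact (C.inv_unique _ _ h).symm

lemma rev {x y z : H} (h : z ∈ C.hmul x y) : x ∈ C.hmul z (C.inv y) :=
  C.reversible z x y h

lemma rev' {x y z : H} (h : z ∈ C.hmul x y) : y ∈ C.hmul (C.inv x) z := by
  have h1 : z ∈ C.hmul y x := by rwa [C.comm]
  have h2 := C.rev h1
  rwa [C.comm]

lemma inv_mem_inv {x y z : H} (h : z ∈ C.hmul x y) :
    C.inv z ∈ C.hmul (C.inv x) (C.inv y) := by
  have h1 : x ∈ C.hmul z (C.inv y) := C.rev h
  have h2 : x ∈ C.hmul (C.inv y) z := by rwa [C.comm] at h1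
  have h3 : C.inv y ∈ C.hmul x (C.inv z) := C.rev h2
  have h4 : C.inv y ∈ C.hmul (C.inv z) x := by rwa [C.comm] at h3
  have h5 : C.inv z ∈ C.hmul (C.inv y) (C.inv x) := C.rev h4
  rwa [C.comm] at h5

lemma zero_mem_heart : C.zero ∈ C.toHypergroup.heartGamma := by
  intro x z hz
  rw [C.hmul_zero] at hz
  cases hz
  exact Relation.EqvGen.refl x

lemma heart_mul {h1 h2 z : H} (hh1 : h1 ∈ C.toHypergroup.heartGamma)
    (hh2 : h2 ∈ C.toHypergroup.heartGamma) (hz : z ∈ C.hmul h1 h2) :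
    z ∈ C.toHypergroup.heartGamma := by
  intro x w hw
  obtain ⟨t, ht, hwt⟩ := C.toHypergroup.assoc_mem₂ hz hw
  exact Relation.EqvGen.trans _ _ _ (hh2 t w hwt) (hh1 x t ht)

lemma heart_inv {h : H} (hh : h ∈ C.toHypergroup.heartGamma) :
    C.inv h ∈ C.toHypergroup.heartGamma := by
  intro x w hw
  have h1 : x ∈ C.hmul w (C.inv (C.inv h)) := C.rev hw
  rw [C.inv_inv] at h1
  exact Relation.EqvGen.symm _ _ (hh w x h1)

/-- crux: if `γ u v`, then the whole of `u⁻¹ ∘ v` lies in the heart. -/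
lemma gamma_heart {u v : H} (h : C.toHypergroup.gamma u v) :
    ∀ w ∈ C.hmul (C.inv u) v, w ∈ C.toHypergroup.heartGamma := by
  obtain ⟨l, l', hperm, hu, hv⟩ := h
  intro w hw x z hz
  obtain ⟨t, ht, hzt⟩ := C.toHypergroup.assoc_mem₂ hw hz
  have hx : x ∈ C.hmul t u := by
    have := C.rev ht
    rwa [C.inv_inv] at this
  have h1 : x ∈ C.toHypergroup.sprod (t :: l) := C.toHypergroup.mem_sprod_cons hu hx
  have h2 : z ∈ C.toHypergroup.sprod (t :: l') := C.toHypergroup.mem_sprod_cons hv hzt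
  exact Relation.EqvGen.rel _ _ ⟨t :: l', t :: l, (hperm.cons t).symm, h2, h1⟩

lemma gamma_mem_coset_heart {u v : H} (h : C.toHypergroup.gamma u v) :
    ∃ w ∈ C.toHypergroup.heartGamma, v ∈ C.hmul u w := by
  obtain ⟨w, hw⟩ := C.nonempty (C.inv u) v
  refine ⟨w, C.gamma_heart h w hw, ?_⟩
  have h1 : w ∈ C.hmul v (C.inv u) := by rwa [C.comm] at hw
  have h2 : v ∈ C.hmul w (C.inv (C.inv u)) := C.rev h1
  rw [C.inv_inv] at h2
  rwa [C.comm] at h2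

end CanonicalHypergroup

section Main

variable (C : CanonicalHypergroup H) (K : Set H)
  (hsub : C.toHypergroup.IsSubhypergroup K) (h0 : C.zero ∈ K)

/-- The derived-times-K coset relation. -/
def Drel (a b : H) : Prop :=
  ∃ d ∈ C.toHypergroup.smul C.toHypergroup.heartGamma K, b ∈ C.hmul a d

lemma mem_D_iff {d : H} :
    d ∈ C.toHypergroup.smul C.toHypergroup.heartGamma K ↔
      ∃ h ∈ C.toHypergroup.heartGamma, ∃ k ∈ K, d ∈ C.hmul h k := by
  simp [Hypergroup.smul]

include hsub h0

lemma K_inv {k : H} (hk : k ∈ K) : C.inv k ∈ K := by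
  have h1 : K ⊆ C.toHypergroup.smul {k} K := hsub.2.2.1 k hk
  have h2 : C.zero ∈ C.toHypergroup.smul {k} K := h1 h0
  simp only [Hypergroup.smul, mem_iUnion, mem_singleton_iff, exists_prop] at h2
  obtain ⟨a, ha, k', hk', hz⟩ := h2
  subst ha
  rw [← C.inv_unique a k' hz]
  exact hk'

lemma zero_mem_D : C.zero ∈ C.toHypergroup.smul C.toHypergroup.heartGamma K :=
  (mem_D_iff C K).mpr ⟨C.zero, C.zero_mem_heart, C.zero, h0, by
    rw [C.zero_hmul]; exact rfl⟩

lemma heart_subset_D {h : H} (hh : h ∈ C.toHypergroup.heartGamma) :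
    h ∈ C.toHypergroup.smul C.toHypergroup.heartGamma K :=
  (mem_D_iff C K).mpr ⟨h, hh, C.zero, h0, C.mem_hmul_zero h⟩

lemma K_subset_D {k : H} (hk : k ∈ K) :
    k ∈ C.toHypergroup.smul C.toHypergroup.heartGamma K :=
  (mem_D_iff C K).mpr ⟨C.zero, C.zero_mem_heart, k, hk, by
    rw [C.zero_hmul]; exact rfl⟩

lemma D_mul {d1 d2 z : H} (hd1 : d1 ∈ C.toHypergroup.smul C.toHypergroup.heartGamma K)
    (hd2 : d2 ∈ C.toHypergroup.smul C.toHypergroup.heartGamma K)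
    (hz : z ∈ C.hmul d1 d2) :
    z ∈ C.toHypergroup.smul C.toHypergroup.heartGamma K := by
  obtain ⟨h1, hh1, k1, hk1, hd1'⟩ := (mem_D_iff C K).mp hd1
  obtain ⟨h2, hh2, k2, hk2, hd2'⟩ := (mem_D_iff C K).mp hd2
  obtain ⟨y, hy, hzy⟩ := C.toHypergroup.assoc_mem₁ hd1' hz
  have hy' : y ∈ C.hmul d2 k1 := by rwa [C.comm] at hy
  obtain ⟨s, hs, hys⟩ := C.toHypergroup.assoc_mem₁ hd2' hy'
  have hsK : s ∈ K := hsub.2.1 k2 hk2 k1 hk1 hs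
  obtain ⟨t, ht, hzt⟩ := C.toHypergroup.assoc_mem₂ hys hzy
  exact (mem_D_iff C K).mpr ⟨t, C.heart_mul hh1 hh2 ht, s, hsK, hzt⟩

lemma D_inv {d : H} (hd : d ∈ C.toHypergroup.smul C.toHypergroup.heartGamma K) :
    C.inv d ∈ C.toHypergroup.smul C.toHypergroup.heartGamma K := by
  obtain ⟨h, hh, k, hk, hd'⟩ := (mem_D_iff C K).mp hd
  exact (mem_D_iff C K).mpr ⟨C.inv h, C.heart_inv hh, C.inv k, K_inv C K hsub h0 hk,
    C.inv_mem_inv hd'⟩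

lemma Drel_refl (a : H) : Drel C K a a :=
  ⟨C.zero, zero_mem_D C K hsub h0, C.mem_hmul_zero a⟩

lemma Drel_symm {a b : H} (h : Drel C K a b) : Drel C K b a := by
  obtain ⟨d, hd, hb⟩ := h
  exact ⟨C.inv d, D_inv C K hsub h0 hd, C.rev hb⟩

lemma Drel_trans {a b c : H} (h1 : Drel C K a b) (h2 : Drel C K b c) : Drel C K a c := by
  obtain ⟨d1, hd1, hb⟩ := h1
  obtain ⟨d2, hd2, hc⟩ := h2
  obtain ⟨y, hy, hcy⟩ := C.toHypergroup.assoc_mem₁ hb hc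
  exact ⟨y, D_mul C K hsub h0 hd1 hd2 hy, hcy⟩

lemma Drel_iff_coset {a b : H} :
    Drel C K a b ↔
      C.toHypergroup.coset (C.toHypergroup.smul C.toHypergroup.heartGamma K) a =
      C.toHypergroup.coset (C.toHypergroup.smul C.toHypergroup.heartGamma K) b := by
  constructor
  · intro h
    ext x
    rw [C.toHypergroup.mem_coset_iff, C.toHypergroup.mem_coset_iff]
    constructor
    · rintro ⟨k, hk, hx⟩
      obtain ⟨d, hd, hxd⟩ := Drel_trans C K hsub h0 (Drel_symm C K hsub h0 h) ⟨k, hk, hx⟩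
      exact ⟨d, hd, hxd⟩
    · rintro ⟨k, hk, hx⟩
      obtain ⟨d, hd, hxd⟩ := Drel_trans C K hsub h0 h ⟨k, hk, hx⟩
      exact ⟨d, hd, hxd⟩
  · intro h
    have hb : b ∈ C.toHypergroup.coset (C.toHypergroup.smul C.toHypergroup.heartGamma K) b := by
      rw [C.toHypergroup.mem_coset_iff]
      exact ⟨C.zero, zero_mem_D C K hsub h0, C.mem_hmul_zero b⟩
    rw [← h, C.toHypergroup.mem_coset_iff] at hb
    obtain ⟨d, hd, hbd⟩ := hb
    exact ⟨d, hd, hbd⟩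

lemma gamma_Drel {u v : H} (h : C.toHypergroup.gamma u v) : Drel C K u v := by
  obtain ⟨w, hw, hv⟩ := C.gamma_mem_coset_heart h
  exact ⟨w, heart_subset_D C K hsub h0 hw, hv⟩

variable (hq : Hypergroup Q) (π : H → Q)
  (hπ : IsQuotientHypergroupMap C.toHypergroup K hq π)

include hπ

lemma image_hprod (a : H) (l : List H) :
    π '' C.toHypergroup.hprod a l = hq.hprod (π a) (l.map π) := by
  induction l generalizing a with
  | nil => simp [Hypergroup.hprod]
  | cons b t ih =>
    show π '' (⋃ x ∈ C.hmul a b, C.toHypergroup.hprod x t) =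
      ⋃ y ∈ hq.hmul (π a) (π b), hq.hprod y (t.map π)
    rw [hπ.2.2, Set.biUnion_image, Set.image_iUnion₂]
    exact iUnion₂_congr fun x _ => ih x

lemma image_sprod (m : List H) :
    hq.sprod (m.map π) = π '' C.toHypergroup.sprod m := by
  cases m with
  | nil => simp [Hypergroup.sprod]
  | cons a t => exact (image_hprod C K hsub h0 hq π hπ a t).symm

lemma perm_lift {l₁ l₂ : List Q} (h : l₁.Perm l₂) :
    ∀ m₁ : List H, m₁.map π = l₁ → ∃ m₂, m₂.map π = l₂ ∧ m₁.Perm m₂ := by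
  induction h with
  | nil =>
    intro m₁ hm
    rw [List.map_eq_nil_iff] at hm
    exact ⟨m₁, by rw [hm]; rfl, List.Perm.refl _⟩
  | cons x p ih =>
    intro m₁ hm
    cases m₁ with
    | nil => simp at hm
    | cons a t =>
      simp only [List.map_cons, List.cons.injEq] at hm
      obtain ⟨t₂, ht₂, hpt⟩ := ih t hm.2
      exact ⟨a :: t₂, by simp [hm.1, ht₂], hpt.cons a⟩
  | swap x y l =>
    intro m₁ hm
    cases m₁ with
    | nil => simp at hm
    | cons a t =>
      cases t with
      | nil => simp at hm
      | cons b t' =>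
        simp only [List.map_cons, List.cons.injEq] at hm
        exact ⟨b :: a :: t', by simp [hm.1, hm.2.1, hm.2.2], List.Perm.swap b a t'⟩
  | trans p1 p2 ih1 ih2 =>
    intro m₁ hm
    obtain ⟨m2, hm2, hp2⟩ := ih1 m₁ hm
    obtain ⟨m3, hm3, hp3⟩ := ih2 m2 hm2
    exact ⟨m3, hm3, hp2.trans hp3⟩

lemma list_lift (l : List Q) : ∃ m : List H, m.map π = l := by
  induction l with
  | nil => exact ⟨[], rfl⟩
  | cons a t ih =>
    obtain ⟨m, hm⟩ := ih
    obtain ⟨x, hx⟩ := hπ.1 a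
    exact ⟨x :: m, by simp [hx, hm]⟩

lemma gammaQ_lift {p q : Q} (h : hq.gamma p q) :
    ∃ u v, π u = p ∧ π v = q ∧ C.toHypergroup.gamma u v := by
  obtain ⟨l, l', hperm, hp, hq'⟩ := h
  obtain ⟨m, hm⟩ := list_lift C K hsub h0 hq π hπ l
  obtain ⟨m', hm', hmm'⟩ := perm_lift C K hsub h0 hq π hπ hperm m hm
  rw [← hm, image_sprod C K hsub h0 hq π hπ] at hp
  rw [← hm', image_sprod C K hsub h0 hq π hπ] at hq'
  obtain ⟨u, hu, hup⟩ := hp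
  obtain ⟨v, hv, hvq⟩ := hq'
  exact ⟨u, v, hup, hvq, ⟨m, m', hmm', hu, hv⟩⟩

lemma gammaH_to_Q {u v : H} (h : C.toHypergroup.gamma u v) : hq.gamma (π u) (π v) := by
  obtain ⟨l, l', hperm, hu, hv⟩ := h
  refine ⟨l.map π, l'.map π, hperm.map π, ?_, ?_⟩
  · rw [image_sprod C K hsub h0 hq π hπ]; exact mem_image_of_mem π hu
  · rw [image_sprod C K hsub h0 hq π hπ]; exact mem_image_of_mem π hv

lemma gammaStarH_to_Q {u v : H} (h : C.toHypergroup.gammaStar u v) :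
    hq.gammaStar (π u) (π v) := by
  induction h with
  | rel a b hab => exact Relation.EqvGen.rel _ _ (gammaH_to_Q C K hsub h0 hq π hπ hab)
  | refl a => exact Relation.EqvGen.refl _
  | symm a b _ ih => exact Relation.EqvGen.symm _ _ ih
  | trans a b c _ _ ih1 ih2 => exact Relation.EqvGen.trans _ _ _ ih1 ih2

lemma fiber_Drel {x a : H} (h : π x = π a) : Drel C K x a := by
  have hc := (hπ.2.1 x a).mp h
  have hx : x ∈ C.toHypergroup.coset K x := by
    rw [C.toHypergroup.mem_coset_iff]
    exact ⟨C.zero, h0, C.mem_hmul_zero x⟩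
  rw [hc, C.toHypergroup.mem_coset_iff] at hx
  obtain ⟨k, hk, hxk⟩ := hx
  exact Drel_symm C K hsub h0 ⟨k, K_subset_D C K hsub h0 hk, hxk⟩

lemma gammaStarQ_Drel : ∀ p q, hq.gammaStar p q →
    ∀ x a, π x = p → π a = q → Drel C K x a := by
  intro p q h
  induction h with
  | rel p q hpq =>
    intro x a hx ha
    obtain ⟨u, v, hu, hv, huv⟩ := gammaQ_lift C K hsub h0 hq π hπ hpq
    have h1 : Drel C K x u := fiber_Drel C K hsub h0 hq π hπ (by rw [hx, hu])
    have h2 : Drel C K u v := gamma_Drel C K hsub h0 huv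
    have h3 : Drel C K v a := fiber_Drel C K hsub h0 hq π hπ (by rw [hv, ha])
    exact Drel_trans C K hsub h0 (Drel_trans C K hsub h0 h1 h2) h3
  | refl p =>
    intro x a hx ha
    exact fiber_Drel C K hsub h0 hq π hπ (by rw [hx, ha])
  | symm p q _ ih =>
    intro x a hx ha
    exact Drel_symm C K hsub h0 (ih a x ha hx)
  | trans p q s _ _ ih1 ih2 =>
    intro x a hx ha
    obtain ⟨b, hb⟩ := hπ.1 q
    exact Drel_trans C K hsub h0 (ih1 x b hx hb) (ih2 b a hb ha)

end Main

end Aux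

open Hypergroup in
/-- for a canonical subhypergroup K of canonical H,
γ*(H/K) ≅ H/(H'∘K), where H' = S_γ is the derived subhypergroup. -/
theorem stmt8 {H Q : Type} (C : CanonicalHypergroup H) (K : Set H)
    (hsub : C.toHypergroup.IsSubhypergroup K) (h0 : C.zero ∈ K)
    (hq : Hypergroup Q) (π : H → Q)
    (hπ : IsQuotientHypergroupMap C.toHypergroup K hq π)
    {G1 : Type} [CommGroup G1] (φ1 : Q → G1)
    (hφ1 : hq.IsQuotientGroupMap hq.gammaStar φ1) :
    ∃ (G2 : Type) (_ : CommGroup G2) (φ2 : H → G2),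
      C.toHypergroup.IsQuotientGroupMap
        (fun x y => C.toHypergroup.coset (C.toHypergroup.smul C.toHypergroup.heartGamma K) x =
                    C.toHypergroup.coset (C.toHypergroup.smul C.toHypergroup.heartGamma K) y) φ2 ∧
      Nonempty (G1 ≃* G2) := by
  set φ : H → G1 := φ1 ∘ π with hφdef
  -- multiplicativity of φ
  have hmulφ : ∀ a b : H, ∀ z ∈ C.hmul a b, φ z = φ a * φ b := by
    intro a b z hz
    have : π z ∈ hq.hmul (π a) (π b) := by
      rw [hπ.2.2]; exact mem_image_of_mem π hz
    exact hφ1.2.2 (π a) (π b) (π z) this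
  have hφzero : φ C.zero = 1 := by
    have h1 : C.zero ∈ C.hmul C.zero C.zero := by rw [C.zero_hmul]; exact rfl
    have h2 := hmulφ C.zero C.zero C.zero h1
    exact (left_eq_mul.mp h2)
  have hφK : ∀ k ∈ K, φ k = 1 := by
    intro k hk
    have hck : C.toHypergroup.coset K k = K := by
      apply Set.Subset.antisymm
      · intro x hx
        rw [C.toHypergroup.mem_coset_iff] at hx
        obtain ⟨k', hk', hx'⟩ := hx
        exact hsub.2.1 k hk k' hk' hx'
      · exact hsub.2.2.1 k hk
    have hcz : C.toHypergroup.coset K C.zero = K := by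
      ext x
      rw [C.toHypergroup.mem_coset_iff]
      constructor
      · rintro ⟨k', hk', hx⟩
        rw [C.zero_hmul] at hx
        cases hx; exact hk'
      · intro hx
        exact ⟨x, hx, by rw [C.zero_hmul]; exact rfl⟩
    have hπk : π k = π C.zero := (hπ.2.1 k C.zero).mpr (by rw [hck, hcz])
    show φ1 (π k) = 1
    rw [hπk]
    exact hφzero
  have hφheart : ∀ h ∈ C.toHypergroup.heartGamma, φ h = 1 := by
    intro h hh
    have h1 : h ∈ C.hmul C.zero h := by rw [C.zero_hmul]; exact rfl
    have h2 : C.toHypergroup.gammaStar h C.zero := hh C.zero h h1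
    have h3 : hq.gammaStar (π h) (π C.zero) := gammaStarH_to_Q C K hsub h0 hq π hπ h2
    have h4 : φ1 (π h) = φ1 (π C.zero) := (hφ1.2.1 (π h) (π C.zero)).mpr h3
    show φ1 (π h) = 1
    rw [h4]; exact hφzero
  have hφD : ∀ d ∈ C.toHypergroup.smul C.toHypergroup.heartGamma K, φ d = 1 := by
    intro d hd
    obtain ⟨h, hh, k, hk, hd'⟩ := (mem_D_iff C K).mp hd
    rw [hmulφ h k d hd', hφheart h hh, hφK k hk, one_mul]
  refine ⟨G1, inferInstance, φ, ⟨hφ1.1.comp hπ.1, ?_, hmulφ⟩, ⟨MulEquiv.refl G1⟩⟩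
  intro a b
  constructor
  · intro hab
    have h1 : hq.gammaStar (π a) (π b) := (hφ1.2.1 (π a) (π b)).mp hab
    exact (Drel_iff_coset C K hsub h0).mp
      (gammaStarQ_Drel C K hsub h0 hq π hπ (π a) (π b) h1 a b rfl rfl)
  · intro hab
    obtain ⟨d, hd, hbd⟩ := (Drel_iff_coset C K hsub h0).mpr hab
    rw [hmulφ a d b hbd, hφD d hd, mul_one]
end

section
/- Let ρ be a strongly regular relation on a hypergroup H, and let δ be the congruence on the group G = H/ρ given by the commutator subgroup G' (i.e. δ-classes are the cosets of G'). Then δ∗ρ is the smallest strongly regular relation on H containing ρ whose quotient H/(δ∗ρ) is an abelian group. In particular, taking ρ = β* yields γ* = δ∗β*. -/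
open Set

/-!
`δ∗ρ` is the kernel of the multiplicative map `H → G → G/G'` into an abelian group, which makes
it strongly regular with abelian quotient. A strongly regular `s ⊇ ρ` pushes forward along
`φ : H → G` to a congruence on `G`; if `H/s` is abelian, this congruence identifies `xy` with
`yx`, hence contains `G'`, which gives minimality. For `ρ = β*`, `γ*` is one such `s`;
conversely, elements related by `γ` lie in hyperproducts of permuted lists, whose images in
`G/G'` agree.
-/

lemma mul_inv_mem_commutator_iff {G : Type*} [Group G] {g h : G} :
    g * h⁻¹ ∈ commutator G ↔ Abelianization.of g = Abelianization.of h := by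
  rw [← Abelianization.ker_of, MonoidHom.mem_ker, map_mul, map_inv, mul_inv_eq_one]

lemma Con.rel_of_abelianization_of_eq {G : Type*} [Group G] (c : Con G)
    (hc : ∀ x y : G, c (x * y) (y * x)) {g h : G}
    (hgh : Abelianization.of g = Abelianization.of h) : c g h := by
  have hle : commutator G ≤ c.mk'.ker := by
    rw [commutator_def, Subgroup.commutator_le]
    intro x _ y _
    rw [MonoidHom.mem_ker, map_commutatorElement, commutatorElement_eq_one_iff_mul_comm,
      ← map_mul, ← map_mul]
    exact c.eq.2 (hc x y)
  have hker : g * h⁻¹ ∈ c.mk'.ker := hle (mul_inv_mem_commutator_iff.2 hgh)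
  rw [MonoidHom.mem_ker, map_mul, map_inv, mul_inv_eq_one] at hker
  exact c.eq.1 hker

namespace Hypergroup

variable {H : Type} (hg : Hypergroup H)

def IsMulHom {M : Type*} [Mul M] (ψ : H → M) : Prop :=
  ∀ a b, ∀ z ∈ hg.hmul a b, ψ z = ψ a * ψ b

variable {hg}

lemma IsMulHom.comp {M N F : Type*} [Mul M] [Mul N] [FunLike F M N] [MulHomClass F M N]
    {ψ : H → M} (hψ : hg.IsMulHom ψ) (f : F) : hg.IsMulHom (f ∘ ψ) := by
  intro a b z hz
  simp only [Function.comp_apply, hψ a b z hz, map_mul]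

lemma IsMulHom.stronglyRegular {M : Type*} [Mul M] {ψ : H → M} (hψ : hg.IsMulHom ψ) :
    hg.StronglyRegular (fun a b => ψ a = ψ b) := by
  refine ⟨⟨fun _ => rfl, Eq.symm, Eq.trans⟩, fun a b x hab => ⟨?_, ?_⟩⟩
  · intro u hu v hv
    rw [hψ a x u hu, hψ b x v hv, hab]
  · intro u hu v hv
    rw [hψ x a u hu, hψ x b v hv, hab]

lemma StronglyRegular.rel_of_mem_hmul {s : H → H → Prop} (hs : hg.StronglyRegular s)
    {a b c d u v : H} (hab : s a b) (hcd : s c d) (hu : u ∈ hg.hmul a c)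
    (hv : v ∈ hg.hmul b d) : s u v := by
  obtain ⟨w, hw⟩ := hg.nonempty b c
  exact hs.1.trans ((hs.2 a b c hab).1 u hu w hw) ((hs.2 c d b hcd).2 w hw v hv)

section InducedCon

variable {G : Type*} [Group G] {φ : H → G} {s : H → H → Prop}

/-- In the paper's notation, `s = σ∗ρ` for this congruence `σ` (see `inducedCon_apply_iff`). -/
def inducedCon (hsurj : Function.Surjective φ) (hφ : hg.IsMulHom φ)
    (hs : hg.StronglyRegular s) (hker : ∀ a b, φ a = φ b → s a b) : Con G where
  r g h := ∃ a b, φ a = g ∧ φ b = h ∧ s a b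
  iseqv := by
    refine ⟨fun g => ?_, ?_, ?_⟩
    · obtain ⟨a, rfl⟩ := hsurj g
      exact ⟨a, a, rfl, rfl, hs.1.refl a⟩
    · rintro _ _ ⟨a, b, rfl, rfl, hab⟩
      exact ⟨b, a, rfl, rfl, hs.1.symm hab⟩
    · rintro _ _ _ ⟨a, b, rfl, rfl, hab⟩ ⟨b', c, hb', rfl, hbc⟩
      exact ⟨a, c, rfl, rfl, hs.1.trans hab (hs.1.trans (hker b b' hb'.symm) hbc)⟩
  mul' := by
    rintro _ _ _ _ ⟨a, b, rfl, rfl, hab⟩ ⟨c, d, rfl, rfl, hcd⟩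
    obtain ⟨u, hu⟩ := hg.nonempty a c
    obtain ⟨v, hv⟩ := hg.nonempty b d
    exact ⟨u, v, hφ a c u hu, hφ b d v hv, hs.rel_of_mem_hmul hab hcd hu hv⟩

lemma inducedCon_apply_iff (hsurj : Function.Surjective φ) (hφ : hg.IsMulHom φ)
    (hs : hg.StronglyRegular s) (hker : ∀ a b, φ a = φ b → s a b) {a b : H} :
    inducedCon hsurj hφ hs hker (φ a) (φ b) ↔ s a b := by
  refine ⟨?_, fun hab => ⟨a, b, rfl, rfl, hab⟩⟩
  rintro ⟨a', b', ha', hb', hab'⟩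
  exact hs.1.trans (hker a a' ha'.symm) (hs.1.trans hab' (hker b' b hb'))

lemma rel_of_abelianization_of_eq (hsurj : Function.Surjective φ) (hφ : hg.IsMulHom φ)
    (hs : hg.StronglyRegular s) (hker : ∀ a b, φ a = φ b → s a b)
    (hcomm : ∀ a b : H, ∀ u ∈ hg.hmul a b, ∀ v ∈ hg.hmul b a, s u v) {a b : H}
    (hab : Abelianization.of (φ a) = Abelianization.of (φ b)) : s a b := by
  rw [← inducedCon_apply_iff hsurj hφ hs hker]
  refine Con.rel_of_abelianization_of_eq _ (fun x y => ?_) hab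
  obtain ⟨c, rfl⟩ := hsurj x
  obtain ⟨d, rfl⟩ := hsurj y
  obtain ⟨u, hu⟩ := hg.nonempty c d
  obtain ⟨v, hv⟩ := hg.nonempty d c
  rw [← hφ c d u hu, ← hφ d c v hv, inducedCon_apply_iff]
  exact hcomm c d u hu v hv

end InducedCon

variable (hg)

lemma hprod_append (a : H) (l₁ l₂ : List H) :
    hg.hprod a (l₁ ++ l₂) = ⋃ y ∈ hg.hprod a l₁, hg.hprod y l₂ := by
  induction l₁ generalizing a with
  | nil => simp [hprod]
  | cons b t ih => simp only [List.cons_append, hprod, ih, biUnion_iUnion]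

lemma mem_sprod_singleton (a : H) : a ∈ hg.sprod [a] := mem_singleton a

variable {hg}

lemma mem_sprod_append_singleton {a u x : H} {l : List H} (ha : a ∈ hg.sprod l)
    (hu : u ∈ hg.hmul a x) : u ∈ hg.sprod (l ++ [x]) := by
  cases l with
  | nil => exact absurd ha (notMem_empty a)
  | cons c t =>
    simp only [sprod, List.cons_append, hprod_append, hprod, mem_iUnion] at ha ⊢
    exact ⟨a, ha, u, hu, rfl⟩

lemma hmul_subset_hprod_cons (x : H) {a c : H} {t : List H} (ha : a ∈ hg.hprod c t) :
    hg.hmul x a ⊆ hg.hprod x (c :: t) := by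
  induction t generalizing c with
  | nil =>
    intro u hu
    rw [mem_singleton_iff.1 ha] at hu
    simp only [hprod, mem_iUnion]
    exact ⟨u, hu, rfl⟩
  | cons d t ih =>
    simp only [hprod, mem_iUnion] at ha
    obtain ⟨y, hy, ha⟩ := ha
    intro u hu
    have hu' := ih ha hu
    simp only [hprod, mem_iUnion] at hu' ⊢
    obtain ⟨z, hz, hu'⟩ := hu'
    have hz' : z ∈ ⋃ w ∈ hg.hmul x c, hg.hmul w d := hg.assoc x c d ▸ mem_biUnion hy hz
    simp only [mem_iUnion] at hz'
    obtain ⟨w, hw, hz'⟩ := hz'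
    exact ⟨w, hw, z, hz', hu'⟩

lemma mem_sprod_cons_s19 {a u x : H} {l : List H} (ha : a ∈ hg.sprod l)
    (hu : u ∈ hg.hmul x a) : u ∈ hg.sprod (x :: l) := by
  cases l with
  | nil => exact absurd ha (notMem_empty a)
  | cons c t => exact hmul_subset_hprod_cons x ha hu

variable (hg)

lemma stronglyRegular_eqvGen {R : H → H → Prop} (hrefl : ∀ a, R a a)
    (hR : ∀ a b x, R a b →
      (∀ u ∈ hg.hmul a x, ∀ v ∈ hg.hmul b x, R u v) ∧
      (∀ u ∈ hg.hmul x a, ∀ v ∈ hg.hmul x b, R u v)) :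
    hg.StronglyRegular (Relation.EqvGen R) := by
  refine ⟨Relation.EqvGen.is_equivalence R, fun a b x hab => ?_⟩
  induction hab with
  | rel a b hab =>
    exact ⟨fun u hu v hv => .rel _ _ ((hR a b x hab).1 u hu v hv),
      fun u hu v hv => .rel _ _ ((hR a b x hab).2 u hu v hv)⟩
  | refl a =>
    exact ⟨fun u hu v hv => .rel _ _ ((hR a a x (hrefl a)).1 u hu v hv),
      fun u hu v hv => .rel _ _ ((hR a a x (hrefl a)).2 u hu v hv)⟩
  | symm a b _ ih =>
    exact ⟨fun u hu v hv => .symm _ _ (ih.1 v hv u hu),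
      fun u hu v hv => .symm _ _ (ih.2 v hv u hu)⟩
  | trans a b c _ _ ih₁ ih₂ =>
    obtain ⟨w, hw⟩ := hg.nonempty b x
    obtain ⟨w', hw'⟩ := hg.nonempty x b
    exact ⟨fun u hu v hv => .trans _ _ _ (ih₁.1 u hu w hw) (ih₂.1 w hw v hv),
      fun u hu v hv => .trans _ _ _ (ih₁.2 u hu w' hw') (ih₂.2 w' hw' v hv)⟩

lemma gamma_refl (a : H) : hg.gamma a a :=
  ⟨[a], [a], List.Perm.refl _, hg.mem_sprod_singleton a, hg.mem_sprod_singleton a⟩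

lemma gammaStar_stronglyRegular : hg.StronglyRegular hg.gammaStar := by
  refine hg.stronglyRegular_eqvGen hg.gamma_refl fun a b x ⟨l, l', hperm, ha, hb⟩ => ⟨?_, ?_⟩
  · exact fun u hu v hv => ⟨l ++ [x], l' ++ [x], hperm.append_right [x],
      mem_sprod_append_singleton ha hu, mem_sprod_append_singleton hb hv⟩
  · exact fun u hu v hv => ⟨x :: l, x :: l', hperm.cons x, mem_sprod_cons_s19 ha hu,
      mem_sprod_cons_s19 hb hv⟩

lemma gamma_of_mem_hmul_of_mem_hmul {a b u v : H} (hu : u ∈ hg.hmul a b)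
    (hv : v ∈ hg.hmul b a) : hg.gamma u v :=
  ⟨[a, b], [b, a], List.Perm.swap b a [],
    mem_sprod_append_singleton (hg.mem_sprod_singleton a) hu,
    mem_sprod_append_singleton (hg.mem_sprod_singleton b) hv⟩

lemma betaStar_le_gammaStar {a b : H} (hab : hg.betaStar a b) : hg.gammaStar a b :=
  hab.mono fun _ _ ⟨l, hx, hy⟩ => ⟨l, l, List.Perm.refl l, hx, hy⟩

variable {hg}

lemma IsMulHom.map_eq_of_mem_hprod {M : Type*} [Monoid M] {ψ : H → M} (hψ : hg.IsMulHom ψ)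
    {l : List H} {a u : H} (hu : u ∈ hg.hprod a l) : ψ u = ψ a * (l.map ψ).prod := by
  induction l generalizing a with
  | nil => simp [mem_singleton_iff.1 hu]
  | cons b t ih =>
    simp only [hprod, mem_iUnion] at hu
    obtain ⟨x, hx, hu⟩ := hu
    rw [ih hu, hψ a b x hx, List.map_cons, List.prod_cons, mul_assoc]

lemma IsMulHom.map_eq_of_mem_sprod {M : Type*} [Monoid M] {ψ : H → M} (hψ : hg.IsMulHom ψ)
    {l : List H} {u : H} (hu : u ∈ hg.sprod l) : ψ u = (l.map ψ).prod := by
  cases l with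
  | nil => exact absurd hu (notMem_empty u)
  | cons c t => rw [hψ.map_eq_of_mem_hprod hu, List.map_cons, List.prod_cons]

lemma IsMulHom.map_eq_of_gammaStar {M : Type*} [CommMonoid M] {ψ : H → M}
    (hψ : hg.IsMulHom ψ) {a b : H} (hab : hg.gammaStar a b) : ψ a = ψ b := by
  refine hψ.stronglyRegular.1.eqvGen_iff.1 (hab.mono ?_)
  rintro x y ⟨l, l', hperm, hx, hy⟩
  rw [hψ.map_eq_of_mem_sprod hx, hψ.map_eq_of_mem_sprod hy, (hperm.map ψ).prod_eq]

end Hypergroup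

open Hypergroup in
theorem stmt19_general {H : Type} (hg : Hypergroup H) (r : H → H → Prop)
    {G : Type} [Group G] (φ : H → G)
    (hφ : hg.IsQuotientGroupMap r φ) :
    -- δ∗ρ is strongly regular
    hg.StronglyRegular (fun a b => φ a * (φ b)⁻¹ ∈ commutator G) ∧
    -- it contains ρ
    (∀ a b, r a b → φ a * (φ b)⁻¹ ∈ commutator G) ∧
    -- its quotient is abelian
    (∀ a b : H, ∀ u ∈ hg.hmul a b, ∀ v ∈ hg.hmul b a,
      φ u * (φ v)⁻¹ ∈ commutator G) ∧
    -- it is the smallest such relation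
    (∀ s : H → H → Prop, hg.StronglyRegular s → (∀ a b, r a b → s a b) →
      (∀ a b : H, ∀ u ∈ hg.hmul a b, ∀ v ∈ hg.hmul b a, s u v) →
      ∀ a b, φ a * (φ b)⁻¹ ∈ commutator G → s a b) ∧
    -- in particular, if ρ = β*, then δ∗ρ = γ*
    ((∀ a b, r a b ↔ hg.betaStar a b) →
      ∀ a b, (φ a * (φ b)⁻¹ ∈ commutator G) ↔ hg.gammaStar a b) := by
  obtain ⟨hsurj, hker, hφ⟩ := hφ
  change hg.IsMulHom φ at hφ
  have hψ : hg.IsMulHom (Abelianization.of ∘ φ) := hφ.comp Abelianization.of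
  have hmin : ∀ s : H → H → Prop, hg.StronglyRegular s → (∀ a b, r a b → s a b) →
      (∀ a b : H, ∀ u ∈ hg.hmul a b, ∀ v ∈ hg.hmul b a, s u v) →
      ∀ a b, Abelianization.of (φ a) = Abelianization.of (φ b) → s a b :=
    fun s hs hrs hcomm _ _ =>
      Hypergroup.rel_of_abelianization_of_eq hsurj hφ hs (fun a b h => hrs a b ((hker a b).1 h))
        hcomm
  simp only [mul_inv_mem_commutator_iff]
  refine ⟨hψ.stronglyRegular, fun a b hab => by rw [(hker a b).2 hab], ?_, hmin, ?_⟩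
  · exact fun a b u hu v hv => (hψ a b u hu).trans ((mul_comm _ _).trans (hψ b a v hv).symm)
  · intro hβ a b
    refine ⟨hmin _ hg.gammaStar_stronglyRegular ?_ ?_ a b, hψ.map_eq_of_gammaStar⟩
    · exact fun a b h => hg.betaStar_le_gammaStar ((hβ a b).1 h)
    · exact fun a b u hu v hv => .rel _ _ (hg.gamma_of_mem_hmul_of_mem_hmul hu hv)

open Hypergroup in
/-- for a strongly regular relation ρ with quotient group G = H/ρ
and δ the congruence mod the commutator subgroup G', the relation δ∗ρ is the
smallest strongly regular relation containing ρ with abelian quotient;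
for ρ = β* this gives γ* = δ∗β*. -/
theorem stmt19 {H : Type} (hg : Hypergroup H) (r : H → H → Prop)
    (hsr : hg.StronglyRegular r) {G : Type} [Group G] (φ : H → G)
    (hφ : hg.IsQuotientGroupMap r φ) :
    -- δ∗ρ is strongly regular
    hg.StronglyRegular (fun a b => φ a * (φ b)⁻¹ ∈ commutator G) ∧
    -- it contains ρ
    (∀ a b, r a b → φ a * (φ b)⁻¹ ∈ commutator G) ∧
    -- its quotient is abelian
    (∀ a b : H, ∀ u ∈ hg.hmul a b, ∀ v ∈ hg.hmul b a,
      φ u * (φ v)⁻¹ ∈ commutator G) ∧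
    -- it is the smallest such relation
    (∀ s : H → H → Prop, hg.StronglyRegular s → (∀ a b, r a b → s a b) →
      (∀ a b : H, ∀ u ∈ hg.hmul a b, ∀ v ∈ hg.hmul b a, s u v) →
      ∀ a b, φ a * (φ b)⁻¹ ∈ commutator G → s a b) ∧
    -- in particular, if ρ = β*, then δ∗ρ = γ*
    ((∀ a b, r a b ↔ hg.betaStar a b) →
      ∀ a b, (φ a * (φ b)⁻¹ ∈ commutator G) ↔ hg.gammaStar a b) :=
  stmt19_general hg r φ hφ
end
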